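/- arXiv:1205.6785 — 7 statements merged into one kernel-verified Lean document; each statement's English description precedes it below -/
import Mathlib

section
/- For every unrestricted Rabin automaton A = (S, Σ, A, T), the set Sh_A of configurations accepted by A is a sofic tree shift, i.e., there exist a tree shift of finite type Y (possibly over an extended alphabet) and a cellular automaton τ with Sh_A = τ(Y). -/
variable {σ A : Type}

/-- The shift action: `shiftMap f w = f^w`, where `f^w (w') = f (w w')`. -/
def shiftMap (f : List σ → A) (w : List σ) : List σ → A := fun w' => f (w ++ w')

/-- A tree shift: a closed, shift-invariant subset of `A^{Σ*}` (prodiscrete topology). -/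
def IsTreeShift [TopologicalSpace A] (X : Set (List σ → A)) : Prop :=
  IsClosed X ∧ ∀ f ∈ X, ∀ w : List σ, shiftMap f w ∈ X

/-- The block `(p, n)` (a pattern on `Δ_n`, the set of words of length `< n`)
appears in the configuration `f`. -/
def Appears (p : List σ → A) (n : ℕ) (f : List σ → A) : Prop :=
  ∃ w : List σ, ∀ u : List σ, u.length < n → f (w ++ u) = p u

/-- The set of configurations avoiding every block in `F`. A block is encoded as a pair
`(p, n)` where only the values of `p` on words of length `< n` are relevant. -/
def XofF (F : Set ((List σ → A) × ℕ)) : Set (List σ → A) :=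
  {f | ∀ b ∈ F, ¬ Appears b.1 b.2 f}

/-- A tree shift of finite type: defined by a finite set of forbidden blocks. -/
def IsFiniteType (X : Set (List σ → A)) : Prop :=
  ∃ F : Set ((List σ → A) × ℕ), F.Finite ∧ X = XofF F

/-- `τ` is a cellular automaton on `X` (with target alphabet `B`): there are a finite
memory set `M ⊆ Σ*` and a local defining map `μ : A^M → B` such that
`τ(f)(w) = μ((f^w)|_M)` for all `f ∈ X` and `w ∈ Σ*`. -/
def IsCellularAutomaton {B : Type} (X : Set (List σ → A))
    (τ : (List σ → A) → (List σ → B)) : Prop :=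
  ∃ (M : Finset (List σ)) (μ : ({m : List σ // m ∈ M} → A) → B),
    ∀ f ∈ X, ∀ w : List σ, τ f w = μ fun m => f (w ++ m.1)

/-- The set of configurations accepted by the unrestricted Rabin automaton with
transition-bundle set `Tr ⊆ S × A × S^Σ`: `f` is accepted via a homomorphism
`α : Σ* → S` with `(α(w); f(w); (α(wσ))_σ) ∈ Tr` for all `w`. -/
def ShA {S : Type} (Tr : Set (S × A × (σ → S))) : Set (List σ → A) :=
  {f | ∃ α : List σ → S, ∀ w : List σ, (α w, f w, fun s => α (w ++ [s])) ∈ Tr}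


/-- Auxiliary: a depth-2 pattern over `Option S × A` is "good" for `Tr`. -/
def GoodPat {S : Type} (Tr : Set (S × A × (σ → S))) (p : List σ → Option S × A) : Prop :=
  ∃ s t, (p []).1 = some s ∧ (∀ x : σ, (p [x]).1 = some (t x)) ∧ (s, (p []).2, t) ∈ Tr

lemma goodPat_congr {S : Type} (Tr : Set (S × A × (σ → S)))
    {p q : List σ → Option S × A} (h : ∀ u : List σ, u.length < 2 → p u = q u) :
    GoodPat Tr p ↔ GoodPat Tr q := by
  have h0 : p [] = q [] := h [] (by simp)
  have h1 : ∀ x : σ, p [x] = q [x] := fun x => h [x] (by simp)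
  constructor
  · rintro ⟨s, t, hs, ht, hTr⟩
    exact ⟨s, t, by rw [← h0]; exact hs, fun x => by rw [← h1 x]; exact ht x,
      by rw [← h0]; exact hTr⟩
  · rintro ⟨s, t, hs, ht, hTr⟩
    exact ⟨s, t, by rw [h0]; exact hs, fun x => by rw [h1 x]; exact ht x,
      by rw [h0]; exact hTr⟩

/-- The set of configurations accepted by an unrestricted Rabin automaton is a sofic tree
shift: up to a suitable extension of the alphabet, it is the image of a tree shift of finite
type under a cellular automaton. -/
theorem shA_isSofic [Finite σ] [Nonempty σ] [Finite A] [Nonempty A]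
    {S : Type} [Finite S] (Tr : Set (S × A × (σ → S))) :
    ∃ (B : Type) (_ : Finite B) (e : A ↪ B)
      (Y : Set (List σ → B)) (τ : (List σ → B) → (List σ → B)),
      IsFiniteType Y ∧ IsCellularAutomaton Y τ ∧
        (fun f : List σ → A => e ∘ f) '' ShA Tr = τ '' Y := by
  classical
  have : Fintype S := Fintype.ofFinite S
  obtain ⟨a₀⟩ := ‹Nonempty A›
  refine ⟨Option S × A, inferInstance, ⟨fun a => (none, a), fun a b h => by
    simpa using congrArg Prod.snd h⟩,
    {g | ∀ w : List σ, GoodPat Tr (fun u => g (w ++ u))},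
    fun g w => ((none : Option S), (g w).2), ?_, ?_, ?_⟩
  · -- finite type
    refine ⟨{b | ¬ GoodPat Tr b.1 ∧ b.2 = 2 ∧
        ∀ u : List σ, ¬ u.length < 2 → b.1 u = ((none, a₀) : Option S × A)}, ?_, ?_⟩
    · have hfin : ({u : List σ | u.length < 2}).Finite := List.finite_length_lt σ 2
      have : Finite {u : List σ // u.length < 2} := hfin.to_subtype
      apply Set.Finite.subset (Set.finite_range
        (fun q : {u : List σ // u.length < 2} → Option S × A =>
          Prod.mk (fun u => if h : u.length < 2 then q ⟨u, h⟩ else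
            ((none, a₀) : Option S × A)) (2 : ℕ)))
      rintro b ⟨hbad, hn, hext⟩
      refine ⟨fun u => b.1 u.1, ?_⟩
      refine Prod.ext ?_ hn.symm
      funext u
      show (if h : u.length < 2 then b.1 u else (none, a₀)) = b.1 u
      by_cases h : u.length < 2
      · rw [dif_pos h]
      · rw [dif_neg h, hext u h]
    · ext g
      constructor
      · rintro hg b hb ⟨w, hw⟩
        obtain ⟨hbad, hn, hext⟩ := hb
        refine hbad ((goodPat_congr (p := fun u => g (w ++ u)) (q := b.1) Tr
          (fun u hu => hw u (hn ▸ hu))).mp (hg w))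
      · intro hg w
        by_contra hbadw
        refine hg (Prod.mk (fun u => if h : u.length < 2 then g (w ++ u) else
            ((none, a₀) : Option S × A)) (2 : ℕ))
          ⟨fun hgood => hbadw ?_, rfl, fun u hu => ?_⟩
          ⟨w, fun u hu => ?_⟩
        · exact (goodPat_congr (p := fun u => if h : u.length < 2 then g (w ++ u)
            else (none, a₀)) (q := fun u => g (w ++ u)) Tr
            (fun u hu => by
              show (if h : u.length < 2 then g (w ++ u) else (none, a₀)) = g (w ++ u)
              rw [dif_pos hu])).mp hgood
        · show (if h : u.length < 2 then g (w ++ u) else (none, a₀)) = (none, a₀)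
          rw [dif_neg hu]
        · show g (w ++ u) = if h : u.length < 2 then g (w ++ u) else (none, a₀)
          rw [dif_pos hu]
  · -- cellular automaton
    refine ⟨{[]}, fun q => ((none : Option S), (q ⟨[], by simp⟩).2), ?_⟩
    intro g _ w
    simp
  · -- image equality
    ext h
    constructor
    · rintro ⟨f, ⟨α, hα⟩, rfl⟩
      refine ⟨fun w => (some (α w), f w), fun w => ?_, funext fun w => rfl⟩
      refine ⟨α w, fun x => α (w ++ [x]), by simp, fun x => rfl, by simpa using hα w⟩
    · rintro ⟨g, hg, rfl⟩
      obtain ⟨s₀, t₀, -, -, -⟩ := hg []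
      refine ⟨fun w => (g w).2, ⟨fun w => ((g w).1).getD s₀, fun w => ?_⟩,
        funext fun w => rfl⟩
      obtain ⟨s, t, hs, ht, hTr⟩ := hg w
      simp only [List.append_nil] at hs hTr
      have hα : ((g w).1).getD s₀ = s := by rw [hs]; rfl
      have hα' : (fun x : σ => ((g (w ++ [x])).1).getD s₀) = t := funext fun x => by
        rw [ht x]; rfl
      show (((g w).1).getD s₀, (g w).2, fun x => ((g (w ++ [x])).1).getD s₀) ∈ Tr
      rw [hα, hα']
      exact hTr
end

section
/- Every nonempty essential unrestricted Rabin automaton accepts at least one configuration, i.e., Sh_A ≠ ∅. -/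
variable {σ A : Type}

noncomputable def essBeta {S : Type} [Nonempty S] (g : S → σ → S) : List σ → S
  | [] => Classical.arbitrary S
  | c :: l => g (essBeta g l) c

/-- Every nonempty essential unrestricted Rabin automaton accepts at least one
configuration. -/
theorem essential_accepts_some [Finite σ] [Nonempty σ] [Finite A] [Nonempty A]
    {S : Type} [Finite S] [Nonempty S] (Tr : Set (S × A × (σ → S)))
    (hess : ∀ s : S, ∃ t ∈ Tr, t.1 = s) :
    (ShA Tr).Nonempty := by
  choose t ht hfst using hess
  let α : List σ → S := fun w => essBeta (fun s c => (t s).2.2 c) w.reverse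
  refine ⟨fun w => (t (α w)).2.1, α, fun w => ?_⟩
  have h1 : (fun s => α (w ++ [s])) = (t (α w)).2.2 := by
    funext s
    show essBeta _ (w ++ [s]).reverse = _
    simp [essBeta, α]
  rw [h1]
  have h2 := hfst (α w)
  have h3 : (α w, (t (α w)).2.1, (t (α w)).2.2) = t (α w) :=
    Prod.ext h2.symm rfl
  rw [h3]
  exact ht (α w)
end

section
/- Let X ⊆ A^{Σ*} be a tree shift of finite type with memory n−1 and τ : X → A^{Σ*} a cellular automaton with memory set Δ_n (n ≥ 2). Then the unrestricted Rabin automaton A(τ, Δ_n, X), whose states are the blocks X_{Δ_{n−1}} and whose bundles are tuples (p; b; (p_σ)_σ) such that the p_σ are compatible overlaps of p, the glued block p̄ lies in X_{Δ_n}, and b = μ(p̄), accepts exactly τ(X): Sh_{A(τ,Δ_n,X)} = τ(X). -/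
variable {σ A : Type}

/-- Patterns with support `Δ_k` (words of length `< k`). -/
abbrev Pat (σ A : Type) (k : ℕ) : Type := {u : List σ // u.length < k} → A

/-- The set `X_{Δ_k}` of blocks of `X` with support `Δ_k`. -/
def BlocksOn (k : ℕ) (X : Set (List σ → A)) : Set (Pat σ A k) :=
  {q | ∃ f ∈ X, ∀ u : {u : List σ // u.length < k}, q u = f u.1}

/-- The block `p̄` on `Δ_{m+2}` agreeing with `p` on `Δ_{m+1}`-root position and with
`^σ p_σ` on `σ Δ_{m+1}`. -/
def glue {m : ℕ} (p : Pat σ A (m + 1)) (ps : σ → Pat σ A (m + 1)) : Pat σ A (m + 2) :=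
  fun u =>
    match u with
    | ⟨[], _⟩ => p ⟨[], Nat.succ_pos m⟩
    | ⟨s :: rest, h⟩ => ps s ⟨rest, by simp only [List.length_cons] at h; omega⟩

/-- The unrestricted Rabin automaton `A(τ, Δ_{m+2}, X)` associated with a cellular
automaton `τ` with memory set `Δ_{m+2}` on a shift of finite type `X` with memory `m+1`.
States are blocks on `Δ_{m+1}`; a bundle `(p; b; (p_σ)_σ)` requires: (i) compatible
overlaps, (ii) the glued block `p̄` lies in `X_{Δ_{m+2}}`, (iii) `b = μ(p̄)`. -/
def caAutomaton (m : ℕ) (X : Set (List σ → A)) (μ : Pat σ A (m + 2) → A) :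
    Set (Pat σ A (m + 1) × A × (σ → Pat σ A (m + 1))) :=
  {t | (∀ (s : σ) (u : List σ) (h : (s :: u).length < m + 1),
          t.1 ⟨s :: u, h⟩ = t.2.2 s ⟨u, by simp only [List.length_cons] at h; omega⟩) ∧
       glue t.1 t.2.2 ∈ BlocksOn (m + 2) X ∧
       t.2.1 = μ (glue t.1 t.2.2)}

/-- `Sh_{A(τ, Δ_n, X)} = τ(X)` for a shift of finite type `X` with memory `n - 1` and a
cellular automaton `τ` with memory set `Δ_n` (here `n = m + 2`). -/
theorem shA_caAutomaton_eq_image [Finite σ] [Nonempty σ] [Finite A] [Nonempty A]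
    (m : ℕ) (F : Set ((List σ → A) × ℕ)) (hFfin : F.Finite)
    (hFsz : ∀ b ∈ F, b.2 = m + 1)
    (X : Set (List σ → A)) (hX : X = XofF F)
    (μ : Pat σ A (m + 2) → A) (τ : (List σ → A) → (List σ → A))
    (hτ : ∀ f ∈ X, ∀ w : List σ, τ f w = μ fun u => f (w ++ u.1)) :
    ShA (caAutomaton m X μ) = τ '' X := by
  subst hX
  ext g
  constructor
  · rintro ⟨α, hα⟩
    set f : List σ → A := fun w => α w ⟨[], Nat.succ_pos m⟩ with hf
    have key : ∀ (u w : List σ) (h : u.length < m + 1), α w ⟨u, h⟩ = f (w ++ u) := by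
      intro u
      induction u with
      | nil => intro w h; simp [hf]
      | cons s rest ih =>
        intro w h
        have h1 : α w ⟨s :: rest, h⟩ = α (w ++ [s])
            ⟨rest, by simp only [List.length_cons] at h; omega⟩ := (hα w).1 s rest h
        rw [h1, ih]
        simp
    have glueEq : ∀ w, glue (α w) (fun s => α (w ++ [s])) =
        fun u : {u : List σ // u.length < m + 2} => f (w ++ u.1) := by
      intro w
      funext u
      obtain ⟨u, hu⟩ := u
      match u with
      | [] => simp [glue, hf]
      | s :: rest =>
        show α (w ++ [s]) ⟨rest, _⟩ = f (w ++ (s :: rest))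
        rw [key]
        simp
    have hfX : f ∈ XofF F := by
      rintro b hb ⟨w, hw⟩
      obtain ⟨h, hhX, hagree⟩ := (hα w).2.1
      refine hhX b hb ⟨[], ?_⟩
      intro u hu
      rw [hFsz b hb] at hw hu
      have hu2 : u.length < m + 2 := by omega
      have h2 := hagree ⟨u, hu2⟩
      rw [glueEq w] at h2
      have h3 : f (w ++ u) = h u := h2
      simp only [List.nil_append]
      rw [← h3, hw u hu]
    refine ⟨f, hfX, ?_⟩
    funext w
    rw [hτ f hfX w, ← glueEq w]
    exact ((hα w).2.2).symm
  · rintro ⟨f, hfX, rfl⟩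
    refine ⟨fun w => fun u => f (w ++ u.1), fun w => ?_⟩
    have glueEq : glue (fun u : {u : List σ // u.length < m + 1} => f (w ++ u.1))
        (fun s => fun u : {u : List σ // u.length < m + 1} => f (w ++ [s] ++ u.1)) =
        fun u : {u : List σ // u.length < m + 2} => f (w ++ u.1) := by
      funext u
      obtain ⟨u, hu⟩ := u
      match u with
      | [] => simp [glue]
      | s :: rest =>
        show f (w ++ [s] ++ rest) = f (w ++ (s :: rest))
        simp
    refine ⟨?_, ?_, ?_⟩
    · intro s u h
      show f (w ++ (s :: u)) = f (w ++ [s] ++ u)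
      simp
    · show glue _ _ ∈ _
      refine ⟨shiftMap f w, ?_, ?_⟩
      · rintro b hb ⟨w', hw'⟩
        exact hfX b hb ⟨w ++ w', fun u hu => by
          rw [List.append_assoc]; exact hw' u hu⟩
      · intro u
        rw [glueEq]
        rfl
    · show τ f w = μ _
      rw [hτ f hfX w, glueEq]
end

section
/- (Subset construction) For every unrestricted Rabin automaton A there exists a co-deterministic unrestricted Rabin automaton A_cod with Sh_A = Sh_{A_cod}. -/
variable {σ A : Type}

/-- A set of transition bundles is co-deterministic if bundles with the same terminal
sequence carry different labels. -/
def CoDeterministic {S : Type} (Tr : Set (S × A × (σ → S))) : Prop :=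
  ∀ t₁ ∈ Tr, ∀ t₂ ∈ Tr, t₁.2.2 = t₂.2.2 → t₁.2.1 = t₂.2.1 → t₁ = t₂

/-- auxiliary defs -/
def Fset {S : Type} (Tr : Set (S × A × (σ → S))) (a : A) (v : σ → Set S) : Set S :=
  {s | ∃ t : σ → S, (s, a, t) ∈ Tr ∧ ∀ x, t x ∈ v x}

def betaSet {S : Type} (Tr : Set (S × A × (σ → S))) (f : List σ → A) (w : List σ) : Set S :=
  {s | ∃ γ : List σ → S, γ [] = s ∧
    ∀ w', (γ w', f (w ++ w'), fun x => γ (w' ++ [x])) ∈ Tr}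

theorem betaSet_eq {S : Type} (Tr : Set (S × A × (σ → S))) (f : List σ → A) (w : List σ) :
    betaSet Tr f w = Fset Tr (f w) (fun x => betaSet Tr f (w ++ [x])) := by
  ext s
  constructor
  · rintro ⟨γ, rfl, hγ⟩
    refine ⟨fun x => γ [x], by simpa using hγ [], ?_⟩
    intro x
    refine ⟨fun w' => γ (x :: w'), rfl, ?_⟩
    intro w'
    have := hγ (x :: w')
    simpa [List.append_assoc] using this
  · rintro ⟨t, ht, hmem⟩
    choose γ hγ0 hγ using hmem
    refine ⟨fun w' => match w' with | [] => s | x :: w'' => γ x w'', rfl, ?_⟩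
    intro w'
    match w' with
    | [] => simpa [hγ0] using ht
    | x :: w'' =>
      have := hγ x w''
      simpa [List.append_assoc] using this

noncomputable def stepFn {S : Type} (Tr : Set (S × A × (σ → S))) (f : List σ → A)
    (β : List σ → Set S) (hβ : ∀ w, β w = Fset Tr (f w) (fun x => β (w ++ [x])))
    (w : List σ) (s : S) (hs : s ∈ β w) : σ → S :=
  (show s ∈ Fset Tr (f w) (fun x => β (w ++ [x])) from (hβ w) ▸ hs).choose

theorem stepFn_spec {S : Type} (Tr : Set (S × A × (σ → S))) (f : List σ → A)
    (β : List σ → Set S) (hβ : ∀ w, β w = Fset Tr (f w) (fun x => β (w ++ [x])))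
    (w : List σ) (s : S) (hs : s ∈ β w) :
    (s, f w, stepFn Tr f β hβ w s hs) ∈ Tr ∧ ∀ x, stepFn Tr f β hβ w s hs x ∈ β (w ++ [x]) :=
  (show s ∈ Fset Tr (f w) (fun x => β (w ++ [x])) from (hβ w) ▸ hs).choose_spec

noncomputable def runFn {S : Type} (Tr : Set (S × A × (σ → S))) (f : List σ → A)
    (β : List σ → Set S) (hβ : ∀ w, β w = Fset Tr (f w) (fun x => β (w ++ [x])))
    (hne : ∀ w, (β w).Nonempty) : (r : List σ) → {s : S // s ∈ β r.reverse}
  | [] => ⟨(hne []).some, by simpa using (hne []).some_mem⟩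
  | x :: r =>
    ⟨stepFn Tr f β hβ r.reverse (runFn Tr f β hβ hne r).1 (runFn Tr f β hβ hne r).2 x,
     by rw [List.reverse_cons]
        exact (stepFn_spec Tr f β hβ r.reverse _ _).2 x⟩


/-- Subset construction: every unrestricted Rabin automaton admits a co-deterministic
unrestricted Rabin automaton accepting the same tree shift. -/
theorem exists_codeterministic [Finite σ] [Nonempty σ] [Finite A] [Nonempty A]
    {S : Type} [Finite S] (Tr : Set (S × A × (σ → S))) :
    ∃ (S' : Type) (_ : Finite S') (Tr' : Set (S' × A × (σ → S'))),
      CoDeterministic Tr' ∧ ShA Tr' = ShA Tr := by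
  classical
  refine ⟨Set S, inferInstance,
    {q | q.1 = Fset Tr q.2.1 q.2.2 ∧ q.1.Nonempty}, ?_, ?_⟩
  · rintro ⟨Q₁, a₁, v₁⟩ ⟨h1, -⟩ ⟨Q₂, a₂, v₂⟩ ⟨h2, -⟩ hv ha
    obtain rfl : v₁ = v₂ := hv
    obtain rfl : a₁ = a₂ := ha
    simp only [Prod.mk.injEq, and_true]
    exact h1.trans h2.symm
  · ext f
    constructor
    · rintro ⟨α', hα'⟩
      have hβ : ∀ w, α' w = Fset Tr (f w) (fun x => α' (w ++ [x])) := fun w => (hα' w).1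
      have hne : ∀ w, (α' w).Nonempty := fun w => (hα' w).2
      refine ⟨fun w => (runFn Tr f α' hβ hne w.reverse).1, ?_⟩
      intro w
      have key := (stepFn_spec Tr f α' hβ w.reverse.reverse
        (runFn Tr f α' hβ hne w.reverse).1 (runFn Tr f α' hβ hne w.reverse).2).1
      have hfw : f w = f w.reverse.reverse := by simp
      have hcong : ∀ r r' : List σ, r = r' →
          (runFn Tr f α' hβ hne r).1 = (runFn Tr f α' hβ hne r').1 := by
        rintro r r' rfl; rfl
      have harg : (fun x => (runFn Tr f α' hβ hne (w ++ [x]).reverse).1)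
          = fun x => (runFn Tr f α' hβ hne (x :: w.reverse)).1 :=
        funext fun x => hcong _ _ (by simp)
      rw [harg, hfw]
      exact key
    · rintro ⟨α, hα⟩
      refine ⟨betaSet Tr f, ?_⟩
      intro w
      refine ⟨betaSet_eq Tr f w, ⟨α w, fun w' => α (w ++ w'), by simp, ?_⟩⟩
      intro w'
      have := hα (w ++ w')
      simpa [List.append_assoc] using this
end

section
/- Assume |Σ| ≥ 2 and |A| ≥ 2. The 'monochromatic children' tree shift X = {f ∈ A^{Σ*} : for all w, f(wσ) = f(wσ') for all σ, σ' ∈ Σ} is sofic but admits no deterministic presentation: there is no unrestricted Rabin automaton A that is deterministic (bundles from each state have distinct labels) with Sh_A = X. -/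
variable {σ A : Type}

/-- A sofic tree shift: the image of a tree shift of finite type under a cellular
automaton (over the same alphabet). -/
def IsSofic (X : Set (List σ → A)) : Prop :=
  ∃ (Y : Set (List σ → A)) (τ : (List σ → A) → (List σ → A)),
    IsFiniteType Y ∧ IsCellularAutomaton Y τ ∧ X = τ '' Y

/-- A set of transition bundles is deterministic if bundles starting at the same state
carry different labels. -/
def Deterministic {S : Type} (Tr : Set (S × A × (σ → S))) : Prop :=
  ∀ t₁ ∈ Tr, ∀ t₂ ∈ Tr, t₁.1 = t₂.1 → t₁.2.1 = t₂.2.1 → t₁ = t₂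

section Aux

attribute [local instance] Classical.propDecidable

variable {S : Type}

private lemma list_prefix_eq_of_length {p q : List σ} (h : p <+: q) (hl : p.length = q.length) :
    p = q := by
  obtain ⟨t, rfl⟩ := h
  simp only [List.length_append] at hl
  have : t = [] := List.eq_nil_of_length_eq_zero (by omega)
  simp [this]

private lemma glue_run (Tr : Set (S × A × (σ → S))) {f g : List σ → A} {α β : List σ → S}
    (hf : ∀ v, (α v, f v, fun t => α (v ++ [t])) ∈ Tr)
    (hg : ∀ v, (β v, g v, fun t => β (v ++ [t])) ∈ Tr)
    (p : List σ) (hq : β [] = α p) (v : List σ) :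
    ((if p <+: v then β (v.drop p.length) else α v : S),
      (if p <+: v then g (v.drop p.length) else f v : A),
      (fun t => if p <+: v ++ [t] then β ((v ++ [t]).drop p.length) else α (v ++ [t]) : σ → S))
      ∈ Tr := by
  classical
  by_cases hpv : p <+: v
  · obtain ⟨v', rfl⟩ := hpv
    have hc : ∀ t : σ, p <+: (p ++ v') ++ [t] := fun t => by
      rw [List.append_assoc]; exact List.prefix_append _ _
    have hd : ∀ t : σ, ((p ++ v') ++ [t]).drop p.length = v' ++ [t] := fun t => by
      rw [List.append_assoc, List.drop_left]
    have hch : (fun t => if p <+: (p ++ v') ++ [t] then β (((p ++ v') ++ [t]).drop p.length)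
        else α ((p ++ v') ++ [t])) = fun t => β (v' ++ [t]) := by
      funext t; rw [if_pos (hc t), hd t]
    rw [if_pos (List.prefix_append p v'), if_pos (List.prefix_append p v'), List.drop_left, hch]
    exact hg v'
  · have hch : (fun t => if p <+: v ++ [t] then β ((v ++ [t]).drop p.length) else α (v ++ [t]))
        = fun t => α (v ++ [t]) := by
      funext t
      by_cases hp2 : p <+: v ++ [t]
      · have hlen : v.length < p.length := by
          by_contra hle
          exact hpv (List.prefix_of_prefix_length_le hp2 (List.prefix_append v [t])
            (le_of_not_gt hle))
        have hlen2 : p.length = (v ++ [t]).length := by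
          have := hp2.length_le
          simp only [List.length_append, List.length_singleton] at this ⊢
          omega
        have hpe : p = v ++ [t] := list_prefix_eq_of_length hp2 hlen2
        rw [if_pos hp2, ← hpe, List.drop_length, hq, hpe]
      · rw [if_neg hp2]
    rw [if_neg hpv, if_neg hpv, hch]
    exact hf v

private lemma root_label (Tr : Set (S × A × (σ → S)))
    (hX : ShA Tr = {f : List σ → A | ∀ (w : List σ) (s s' : σ), f (w ++ [s]) = f (w ++ [s'])})
    {f : List σ → A} {α : List σ → S} (hf : ∀ v, (α v, f v, fun t => α (v ++ [t])) ∈ Tr)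
    {g : List σ → A} {β : List σ → S} (hg : ∀ v, (β v, g v, fun t => β (v ++ [t])) ∈ Tr)
    {w : List σ} {s s' : σ} (hq : β [] = α (w ++ [s])) (hss : s ≠ s') :
    g [] = f (w ++ [s']) := by
  classical
  have hmem : (fun v => if (w ++ [s]) <+: v then g (v.drop (w ++ [s]).length) else f v)
      ∈ ShA Tr :=
    ⟨fun v => if (w ++ [s]) <+: v then β (v.drop (w ++ [s]).length) else α v,
      fun v => glue_run Tr hf hg (w ++ [s]) hq v⟩
  rw [hX] at hmem
  have hm := hmem w s s'
  have hnp : ¬ (w ++ [s]) <+: w ++ [s'] := by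
    intro hpre
    have heq : w ++ [s] = w ++ [s'] := list_prefix_eq_of_length hpre (by simp)
    have : s = s' := by simpa using heq
    exact hss this
  simp only at hm
  rw [if_pos (List.prefix_refl _), if_neg hnp, List.drop_length] at hm
  exact hm

private lemma key_unique [Nontrivial σ] (Tr : Set (S × A × (σ → S)))
    (hdet : Deterministic Tr)
    (hX : ShA Tr = {f : List σ → A | ∀ (w : List σ) (s s' : σ), f (w ++ [s]) = f (w ++ [s'])}) :
    ∀ u : List σ, ∀ q : S,
      (∃ (f : List σ → A) (α : List σ → S) (w : List σ) (s : σ),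
        (∀ v, (α v, f v, fun t => α (v ++ [t])) ∈ Tr) ∧ α (w ++ [s]) = q) →
      ∀ (g g' : List σ → A) (β β' : List σ → S),
        (∀ v, (β v, g v, fun t => β (v ++ [t])) ∈ Tr) →
        (∀ v, (β' v, g' v, fun t => β' (v ++ [t])) ∈ Tr) →
        β [] = q → β' [] = q → g u = g' u := by
  classical
  intro u
  induction u with
  | nil =>
    rintro q ⟨f, α, w, s, hf, hα⟩ g g' β β' hg hg' hβ hβ'
    obtain ⟨s', hss⟩ := exists_ne s
    have h1 := root_label Tr hX hf hg (hβ.trans hα.symm) hss.symm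
    have h2 := root_label Tr hX hf hg' (hβ'.trans hα.symm) hss.symm
    exact h1.trans h2.symm
  | cons s'' u' ih =>
    rintro q ⟨f, α, w, s, hf, hα⟩ g g' β β' hg hg' hβ hβ'
    have hroot : g [] = g' [] := by
      obtain ⟨s', hss⟩ := exists_ne s
      have h1 := root_label Tr hX hf hg (hβ.trans hα.symm) hss.symm
      have h2 := root_label Tr hX hf hg' (hβ'.trans hα.symm) hss.symm
      exact h1.trans h2.symm
    have heq := hdet _ (hg []) _ (hg' []) (by simpa using hβ.trans hβ'.symm) (by exact hroot)
    have hstate : β [s''] = β' [s''] := by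
      have := congrArg (fun t : S × A × (σ → S) => t.2.2 s'') heq
      simpa using this
    have hγ := fun v => glue_run Tr hf hg (w ++ [s]) (hβ.trans hα.symm) v
    have hwit : (if (w ++ [s]) <+: (w ++ [s]) ++ [s'']
        then β (((w ++ [s]) ++ [s'']).drop (w ++ [s]).length)
        else α ((w ++ [s]) ++ [s''])) = β [s''] := by
      rw [if_pos (List.prefix_append _ _), List.drop_left]
    have hrun1 : ∀ v, (β ([s''] ++ v), g ([s''] ++ v),
        fun t => β ([s''] ++ (v ++ [t]))) ∈ Tr := fun v => by
      have := hg ([s''] ++ v)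
      simpa [List.append_assoc] using this
    have hrun2 : ∀ v, (β' ([s''] ++ v), g' ([s''] ++ v),
        fun t => β' ([s''] ++ (v ++ [t]))) ∈ Tr := fun v => by
      have := hg' ([s''] ++ v)
      simpa [List.append_assoc] using this
    have hres := ih (β [s''])
      ⟨(fun v => if (w ++ [s]) <+: v then g (v.drop (w ++ [s]).length) else f v),
       (fun v => if (w ++ [s]) <+: v then β (v.drop (w ++ [s]).length) else α v),
       w ++ [s], s'', hγ, hwit⟩
      (fun v => g ([s''] ++ v)) (fun v => g' ([s''] ++ v))
      (fun v => β ([s''] ++ v)) (fun v => β' ([s''] ++ v))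
      hrun1 hrun2 (by simp) (by simpa using hstate.symm)
    exact hres

end Aux

/-- For `|Σ| ≥ 2` and `|A| ≥ 2`, the "monochromatic children" tree shift is sofic but
admits no deterministic presentation by an unrestricted Rabin automaton. -/
theorem monochromatic_sofic_no_deterministic_presentation
    [Finite σ] [Nontrivial σ] [Finite A] [Nontrivial A]
    (X : Set (List σ → A))
    (hX : X = {f : List σ → A | ∀ (w : List σ) (s s' : σ), f (w ++ [s]) = f (w ++ [s'])}) :
    IsSofic X ∧
      ¬ ∃ (S : Type) (_ : Finite S) (Tr : Set (S × A × (σ → S))),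
          Deterministic Tr ∧ ShA Tr = X := by
  classical
  constructor
  · -- Sofic: X itself is of finite type, and the identity is a cellular automaton.
    obtain ⟨a₀⟩ : Nonempty A := inferInstance
    refine ⟨X, id, ?_, ?_, (Set.image_id X).symm⟩
    · refine ⟨(fun x : A × (σ → A) => ((fun u : List σ => match u with
          | [] => x.1
          | [t] => x.2 t
          | _ => a₀), 2)) '' {x | ∃ s s', x.2 s ≠ x.2 s'},
        (Set.toFinite _).image _, ?_⟩
      rw [hX]
      ext f
      constructor
      · intro hf b hb hap
        obtain ⟨⟨c, gg⟩, ⟨s, s', hss⟩, rfl⟩ := hb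
        obtain ⟨w, hw⟩ := hap
        have h1 : f (w ++ [s]) = gg s := hw [s] (by simp)
        have h2 : f (w ++ [s']) = gg s' := hw [s'] (by simp)
        exact hss ((h1.symm.trans (hf w s s')).trans h2)
      · intro hf w s s'
        by_contra hne
        refine hf _ ⟨(f w, fun t => f (w ++ [t])), ⟨s, s', hne⟩, rfl⟩ ⟨w, ?_⟩
        intro u hu
        have hu2 : u.length < 2 := hu
        clear hu
        match u, hu2 with
        | [], _ => simp
        | [t], _ => rfl
        | t :: t' :: r, h2 => simp only [List.length_cons] at h2; omega
    · refine ⟨{[]}, fun g => g ⟨[], by simp⟩, ?_⟩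
      intro f _ w
      simp
  · -- No deterministic presentation.
    rintro ⟨S, hSfin, Tr, hdet, hShA⟩
    haveI := hSfin
    have hX' : ShA Tr = {f : List σ → A | ∀ (w : List σ) (s s' : σ),
        f (w ++ [s]) = f (w ++ [s'])} := hShA.trans hX
    -- X is finite.
    have hrun : ∀ f : ↥X, ∃ α : List σ → S,
        ∀ v, (α v, f.1 v, fun t => α (v ++ [t])) ∈ Tr := by
      intro f
      have : f.1 ∈ ShA Tr := hShA.symm ▸ f.2
      exact this
    choose ρ hρ using hrun
    haveI : Finite (↥X) := by
      apply Finite.of_injective (fun f : ↥X => ((f.1 [], fun s : σ => ρ f [s]) : A × (σ → S)))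
      intro f g hfg
      have h0 : f.1 [] = g.1 [] := congrArg Prod.fst hfg
      have h1 : ∀ s : σ, ρ f [s] = ρ g [s] := fun s => congrFun (congrArg Prod.snd hfg) s
      ext u
      match u with
      | [] => exact h0
      | s :: u' =>
        have hrf : ∀ v, (ρ f ([s] ++ v), f.1 ([s] ++ v),
            fun t => ρ f ([s] ++ (v ++ [t]))) ∈ Tr := fun v => by
          have := hρ f ([s] ++ v)
          simpa [List.append_assoc] using this
        have hrg : ∀ v, (ρ g ([s] ++ v), g.1 ([s] ++ v),
            fun t => ρ g ([s] ++ (v ++ [t]))) ∈ Tr := fun v => by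
          have := hρ g ([s] ++ v)
          simpa [List.append_assoc] using this
        have := key_unique Tr hdet hX' u' (ρ f [s])
          ⟨f.1, ρ f, [], s, hρ f, rfl⟩
          (fun v => f.1 ([s] ++ v)) (fun v => g.1 ([s] ++ v))
          (fun v => ρ f ([s] ++ v)) (fun v => ρ g ([s] ++ v))
          hrf hrg (by simp) (by simpa using (h1 s).symm)
        exact this
    -- X is infinite.
    obtain ⟨a, b, hab⟩ := exists_pair_ne A
    have hmem : ∀ n : ℕ, (fun w : List σ => if w.length = n then a else b) ∈ X := by
      intro n
      rw [hX]
      intro w s s'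
      simp
    have s0 : σ := Classical.choice inferInstance
    haveI : Infinite (↥X) := by
      apply Infinite.of_injective (fun n : ℕ => (⟨_, hmem n⟩ : ↥X))
      intro n m hnm
      have := congrArg (fun f : ↥X => f.1 (List.replicate n s0)) hnm
      by_contra hne
      simp only [List.length_replicate, if_pos rfl, if_neg hne] at this
      exact hab this
    exact not_finite ↥X
end

section
/- Let A be an unrestricted Rabin automaton, T ⊆ Σ* a subtree containing the root, and f : T → A a map accepted by A (via α : T → S with each (α(w); f(w); (α(wσ))_{σ∈Σ_T(w)}) a sub-bundle of some bundle in T). Then there exists a configuration f̄ ∈ Sh_A with f̄|_T = f. -/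
/-!
Extend the local choices to all of `Σ*` deterministically: at a vertex `w ∈ T` whose current
state is `α w`, use the bundle witnessing acceptance of `f` at `w`; at any other vertex, use
some bundle with the current state as source, which exists because the automaton is essential.
Running these choices from `α []` down the tree yields an accepting run of a configuration; on
the prefix-closed set `T` the run stays equal to `α`, so the configuration agrees with `f` there.
-/

variable {σ A : Type}

variable {S : Type}

def treeRun (s₀ : S) (F : List σ → S → σ → S) (w : List σ) : S :=
  w.reverseRecOn s₀ fun w a s => F w s a

@[simp]
theorem treeRun_nil (s₀ : S) (F : List σ → S → σ → S) : treeRun s₀ F [] = s₀ :=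
  List.reverseRecOn_nil (motive := fun _ => S) _ _

@[simp]
theorem treeRun_append_singleton (s₀ : S) (F : List σ → S → σ → S) (w : List σ) (a : σ) :
    treeRun s₀ F (w ++ [a]) = F w (treeRun s₀ F w) a :=
  List.reverseRecOn_concat (motive := fun _ => S) _ _ _ _

theorem treeRun_eqOn_of_isPrefixClosed (T : Set (List σ))
    (hpref : ∀ (w : List σ) (a : σ), w ++ [a] ∈ T → w ∈ T)
    (α : List σ → S) (F : List σ → S → σ → S)
    (hF : ∀ (w : List σ) (a : σ), w ++ [a] ∈ T → F w (α w) a = α (w ++ [a])) :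
    ∀ w ∈ T, treeRun (α []) F w = α w := by
  intro w
  induction w using List.reverseRecOn with
  | nil => intro _; exact treeRun_nil _ _
  | append_singleton w a ih =>
    intro hwa
    rw [treeRun_append_singleton, ih (hpref w a hwa), hF w a hwa]

theorem mem_ShA_of_bundleChoice (Tr : Set (S × A × (σ → S)))
    (choice : List σ → S → S × A × (σ → S))
    (hmem : ∀ w s, choice w s ∈ Tr) (hsrc : ∀ w s, (choice w s).1 = s) (s₀ : S) :
    (fun w => (choice w (treeRun s₀ (fun w s => (choice w s).2.2) w)).2.1) ∈ ShA Tr := by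
  set run := treeRun s₀ fun w s => (choice w s).2.2
  refine ⟨run, fun w => ?_⟩
  convert hmem w (run w) using 1
  exact Prod.ext (hsrc w (run w)).symm
    (Prod.ext rfl (funext fun a => treeRun_append_singleton _ _ w a))

theorem accepted_on_subtree_extends_general
    {S : Type} (Tr : Set (S × A × (σ → S)))
    (hess : ∀ s : S, ∃ t ∈ Tr, t.1 = s)
    (T : Set (List σ))
    (hpref : ∀ (w : List σ) (s : σ), w ++ [s] ∈ T → w ∈ T)
    (f : List σ → A) (α : List σ → S)
    (hacc : ∀ w ∈ T, ∃ t ∈ Tr, t.1 = α w ∧ t.2.1 = f w ∧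
              ∀ s : σ, w ++ [s] ∈ T → t.2.2 s = α (w ++ [s])) :
    ∃ g ∈ ShA Tr, ∀ w ∈ T, g w = f w := by
  classical
  choose t htr hsrc hlabel hchild using hacc
  choose u hu husrc using hess
  let choice : List σ → S → S × A × (σ → S) := fun w s =>
    if h : w ∈ T ∧ s = α w then t w h.1 else u s
  have hchoice_T : ∀ w (hw : w ∈ T), choice w (α w) = t w hw := fun w hw => dif_pos ⟨hw, rfl⟩
  have hchoice_mem : ∀ w s, choice w s ∈ Tr := fun w s => by
    unfold choice; split_ifs with h
    exacts [htr w h.1, hu s]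
  have hchoice_src : ∀ w s, (choice w s).1 = s := fun w s => by
    unfold choice; split_ifs with h
    exacts [(hsrc w h.1).trans h.2.symm, husrc s]
  have hrun := treeRun_eqOn_of_isPrefixClosed T hpref α (fun w s => (choice w s).2.2)
    fun w a hwa => by rw [hchoice_T w (hpref w a hwa), hchild w _ a hwa]
  refine ⟨_, mem_ShA_of_bundleChoice Tr choice hchoice_mem hchoice_src (α []), fun w hw => ?_⟩
  rw [hrun w hw, hchoice_T w hw, hlabel]

/-- A map accepted by an essential unrestricted Rabin automaton on a subtree of `Σ*`
extends to an accepted configuration. Acceptance on the subtree `T` means: there is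
`α : T → S` such that at each `w ∈ T`, `(α(w); f(w); (α(wσ))_{σ ∈ Σ_T(w)})` is a
sub-bundle of some transition bundle. -/
theorem accepted_on_subtree_extends [Finite σ] [Nonempty σ] [Finite A] [Nonempty A]
    {S : Type} [Finite S] (Tr : Set (S × A × (σ → S)))
    (hess : ∀ s : S, ∃ t ∈ Tr, t.1 = s)
    (T : Set (List σ)) (hroot : ([] : List σ) ∈ T)
    (hpref : ∀ (w : List σ) (s : σ), w ++ [s] ∈ T → w ∈ T)
    (f : List σ → A) (α : List σ → S)
    (hacc : ∀ w ∈ T, ∃ t ∈ Tr, t.1 = α w ∧ t.2.1 = f w ∧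
              ∀ s : σ, w ++ [s] ∈ T → t.2.2 s = α (w ++ [s])) :
    ∃ g ∈ ShA Tr, ∀ w ∈ T, g w = f w :=
  accepted_on_subtree_extends_general Tr hess T hpref f α hacc
end

section
/- For an essential unrestricted Rabin automaton A, a full-tree-pattern p ∈ A^T (T a finite full subtree of Σ*) belongs to T(Sh_A) (i.e., extends to an accepted configuration) if and only if p is accepted by A, i.e., there exists α : T⁺ → S such that (α(w); p(w); (α(wσ))_{σ∈Σ}) ∈ T for each w ∈ T. -/
variable {σ A : Type}

/-- Auxiliary state assignment, on reversed words. -/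
noncomputable def auxSt {σ A S : Type} (α : List σ → S) (b : S → S × A × (σ → S))
    (T : Set (List σ)) [DecidablePred (· ∈ T)] : List σ → S
  | [] => α []
  | s :: r => if r.reverse ∈ T then α (r.reverse ++ [s]) else (b (auxSt α b T r)).2.2 s

/-- For an essential unrestricted Rabin automaton, a full-tree-pattern `p` on a finite full
subtree `T` is the restriction of an accepted configuration if and only if `p` is accepted,
i.e. there is `α : T⁺ → S` with `(α(w); p(w); (α(wσ))_σ) ∈ Tr` for each `w ∈ T`. -/
theorem fullTreePattern_mem_iff_accepted [Finite σ] [Nonempty σ] [Finite A] [Nonempty A]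
    {S : Type} [Finite S] (Tr : Set (S × A × (σ → S)))
    (hess : ∀ s : S, ∃ t ∈ Tr, t.1 = s)
    (T : Set (List σ)) (hfin : T.Finite) (hroot : ([] : List σ) ∈ T)
    (hpref : ∀ (w : List σ) (s : σ), w ++ [s] ∈ T → w ∈ T)
    (hfull : ∀ w ∈ T, (∃ s : σ, w ++ [s] ∈ T) → ∀ s : σ, w ++ [s] ∈ T)
    (p : List σ → A) :
    (∃ f ∈ ShA Tr, ∀ w ∈ T, f w = p w) ↔
      ∃ α : List σ → S, ∀ w ∈ T, (α w, p w, fun s => α (w ++ [s])) ∈ Tr := by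
  classical
  constructor
  · rintro ⟨f, ⟨α, hα⟩, hfp⟩
    exact ⟨α, fun w hw => by rw [← hfp w hw]; exact hα w⟩
  · rintro ⟨α, hα⟩
    choose b hbTr hb1 using hess
    set st : List σ → S := fun w => auxSt α b T w.reverse with hst
    have hst_succ : ∀ (w : List σ) (s : σ),
        st (w ++ [s]) = if w ∈ T then α (w ++ [s]) else (b (st w)).2.2 s := by
      intro w s
      simp only [hst, List.reverse_append, List.reverse_cons, List.reverse_nil,
        List.nil_append, List.cons_append, auxSt, List.reverse_reverse]
    have hstT : ∀ w ∈ T, st w = α w := by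
      intro w hw
      rcases List.eq_nil_or_concat w with h | ⟨v, s, h⟩
      · subst h; rfl
      · subst h
        rw [List.concat_eq_append] at hw ⊢
        rw [hst_succ, if_pos (hpref v s hw)]
    set f : List σ → A := fun w => if w ∈ T then p w else (b (st w)).2.1 with hf
    refine ⟨f, ⟨st, ?_⟩, fun w hw => if_pos hw⟩
    intro w
    by_cases hw : w ∈ T
    · have h1 : st w = α w := hstT w hw
      have h2 : ∀ s : σ, st (w ++ [s]) = α (w ++ [s]) := by
        intro s; rw [hst_succ, if_pos hw]
      have : f w = p w := if_pos hw
      rw [h1, this]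
      have h3 : (fun s => st (w ++ [s])) = fun s => α (w ++ [s]) := funext h2
      rw [h3]
      exact hα w hw
    · have h2 : ∀ s : σ, st (w ++ [s]) = (b (st w)).2.2 s := by
        intro s; rw [hst_succ, if_neg hw]
      have h3 : (fun s => st (w ++ [s])) = (b (st w)).2.2 := funext h2
      have hfw : f w = (b (st w)).2.1 := if_neg hw
      rw [hfw, h3]
      have h1 := hb1 (st w)
      have heq : (st w, (b (st w)).2.1, (b (st w)).2.2) = b (st w) :=
        Prod.ext h1.symm rfl
      rw [heq]
      exact hbTr (st w)
end
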